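/- Let ρ > 0 be a real parameter. Define the MKdV map of one degree of freedom by p̄ = p + 2·log((1 + ρ·e^q)/(ρ + e^q)) and q̄ = q + 2·log((ρ + e^{p̄})/(1 + ρ·e^{p̄})). Then the function I(q,p) = e^{p−q} + e^{q−p} + 2ρ(e^p + e^q + e^{−p} + e^{−q}) + ρ²(e^{p+q} + e^{−(p+q)}) is invariant: I(q̄, p̄) = I(q, p). -/

import Mathlib

noncomputable section

/-- The invariant of the one-degree-of-freedom MKdV map:
`I(q,p) = e^{p−q} + e^{q−p} + 2ρ(e^p + e^q + e^{−p} + e^{−q}) + ρ²(e^{p+q} + e^{−(p+q)})`. -/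
def mkdvInv (ρ q p : ℝ) : ℝ :=
  Real.exp (p - q) + Real.exp (q - p) +
    2 * ρ * (Real.exp p + Real.exp q + Real.exp (-p) + Real.exp (-q)) +
    ρ ^ 2 * (Real.exp (p + q) + Real.exp (-(p + q)))

/-!
In the variables `x = e^q`, `y = e^p` the invariant is `J(x, y) = y/x + x/y + 2ρ(x + y + 1/x + 1/y)
+ ρ²(xy + 1/(xy))`, which is symmetric in `x, y` and unchanged under `(x, y) ↦ (1/x, 1/y)`.
For fixed `x` it has the form `a·y + b/y + c` with `a = (1+ρx)²/x`, `b = (ρ+x)²/x`, so it takes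
the same value at the two Vieta partners `y, y'` with `a·y·y' = b`. With `x̄ = e^q̄`, `ȳ = e^p̄`,
the map says that `1/ȳ` is the partner of `y` at `x` and `x̄` is the partner of `1/x` at `ȳ`, so
`J(x, y) = J(x, 1/ȳ) = J(1/x, ȳ) = J(x̄, ȳ)`.
-/

open Real

namespace MKdV

theorem exp_add_two_mul_log (y : ℝ) {z : ℝ} (hz : z ≠ 0) :
    exp (y + 2 * log z) = exp y * z ^ 2 := by
  rw [exp_add, ← Nat.cast_ofNat, ← log_pow, exp_log (pow_two_pos_of_ne_zero hz)]

def mulInvariant (ρ x y : ℝ) : ℝ :=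
  y / x + x / y + 2 * ρ * (x + y + x⁻¹ + y⁻¹) + ρ ^ 2 * (x * y + (x * y)⁻¹)

theorem mkdvInv_eq_mulInvariant (ρ q p : ℝ) :
    mkdvInv ρ q p = mulInvariant ρ (exp q) (exp p) := by
  simp only [mkdvInv, mulInvariant, exp_sub, exp_neg, exp_add]
  ring

theorem mulInvariant_comm (ρ x y : ℝ) : mulInvariant ρ x y = mulInvariant ρ y x := by
  unfold mulInvariant
  ring

theorem mulInvariant_inv_inv (ρ x y : ℝ) : mulInvariant ρ x⁻¹ y⁻¹ = mulInvariant ρ x y := by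
  unfold mulInvariant
  rw [mul_inv, inv_inv, inv_inv, ← mul_inv]
  field_simp
  ring

theorem mulInvariant_eq_of_mul_eq (ρ : ℝ) {x y y' : ℝ} (hx : x ≠ 0) (hy : y ≠ 0) (hy' : y' ≠ 0)
    (h : (1 + ρ * x) ^ 2 * y * y' = (ρ + x) ^ 2) : mulInvariant ρ x y' = mulInvariant ρ x y := by
  unfold mulInvariant
  field_simp
  linear_combination (y' - y) * h

end MKdV

open MKdV

/-- The function `I(q,p)` is invariant under the one-degree-of-freedom MKdV map
`p̄ = p + 2 log((1+ρe^q)/(ρ+e^q))`, `q̄ = q + 2 log((ρ+e^{p̄})/(1+ρe^{p̄}))`, for `ρ > 0`. -/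
theorem mkdv_map_invariant (ρ : ℝ) (hρ : 0 < ρ) (q p : ℝ)
    (pbar : ℝ)
    (hpbar : pbar = p + 2 * Real.log ((1 + ρ * Real.exp q) / (ρ + Real.exp q)))
    (qbar : ℝ)
    (hqbar : qbar = q + 2 * Real.log ((ρ + Real.exp pbar) / (1 + ρ * Real.exp pbar))) :
    mkdvInv ρ qbar pbar = mkdvInv ρ q p := by
  have hA := exp_pos q
  have hB := exp_pos p
  have hP := exp_pos pbar
  have hQ := exp_pos qbar
  have hPB : (1 + ρ * exp q) ^ 2 * exp p * (exp pbar)⁻¹ = (ρ + exp q) ^ 2 := by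
    rw [hpbar, exp_add_two_mul_log _ (by positivity)]
    field_simp
  have hQP : (1 + ρ * exp pbar) ^ 2 * (exp q)⁻¹ * exp qbar = (ρ + exp pbar) ^ 2 := by
    rw [hqbar, exp_add_two_mul_log _ (by positivity)]
    field_simp
  calc mkdvInv ρ qbar pbar
      = mulInvariant ρ (exp pbar) (exp qbar) := by
        rw [mkdvInv_eq_mulInvariant, mulInvariant_comm]
    _ = mulInvariant ρ (exp pbar) (exp q)⁻¹ :=
      mulInvariant_eq_of_mul_eq ρ hP.ne' (inv_ne_zero hA.ne') hQ.ne' hQP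
    _ = mulInvariant ρ (exp q) (exp pbar)⁻¹ := by
      rw [mulInvariant_comm, ← mulInvariant_inv_inv ρ (exp q)⁻¹, inv_inv]
    _ = mulInvariant ρ (exp q) (exp p) :=
      mulInvariant_eq_of_mul_eq ρ hA.ne' hB.ne' (inv_ne_zero hP.ne') hPB
    _ = mkdvInv ρ q p := (mkdvInv_eq_mulInvariant ρ q p).symm
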